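/- Fix β ∈ ℝ and d > 0. Suppose Γ₁ ∈ (0,∞) and Γ_d ∈ (0,∞) satisfy: for ν-almost every w, −t^{−1} ln sup_{x∈ℝ} μ^x{ f : βw(s) ≤ f(s) ≤ 1 + βw(s) for all s ∈ [0,t] } → Γ₁ and −t^{−1} ln sup_{x∈ℝ} μ^x{ f : βw(s) ≤ f(s) ≤ d + βw(s) for all s ∈ [0,t] } → Γ_d as t → ∞. Then Γ_d = Γ₁ / d². -/

import Mathlib

open MeasureTheory ProbabilityTheory Filter Set Topology
open scoped NNReal ENNReal

noncomputable section

/-- The path space `C([0,∞), ℝ)`. -/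
abbrev BMPath : Type := C(ℝ≥0, ℝ)

instance : MeasurableSpace BMPath := borel _
instance : BorelSpace BMPath := ⟨rfl⟩

/-- `μ` is the law of a standard one-dimensional Brownian motion started at `x`:
a probability measure on `C([0,∞),ℝ)` under which the path starts at `x`,
increments are centered Gaussian with variance equal to the time lapse,
and increments over disjoint time intervals are independent. -/
structure IsBMLaw (x : ℝ) (μ : Measure BMPath) : Prop where
  isProb : IsProbabilityMeasure μ
  start : μ {f : BMPath | f 0 = x} = 1
  incr_law : ∀ s t : ℝ≥0, s ≤ t →
      μ.map (fun f : BMPath => f t - f s) = gaussianReal 0 (t - s)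
  indep_incr : ∀ (n : ℕ) (ts : Fin (n + 1) → ℝ≥0), Monotone ts →
      iIndepFun
        (fun (i : Fin n) (f : BMPath) => f (ts i.succ) - f (ts i.castSucc)) μ

/-- Paths staying in the moving corridor `[l + β·w(s), u + β·w(s)]` for all `s ∈ [0,t]`. -/
def corridor (β l u : ℝ) (t : ℝ≥0) (w : BMPath) : Set BMPath :=
  {f : BMPath | ∀ s ≤ t, l + β * w s ≤ f s ∧ f s ≤ u + β * w s}

/-- The corridor event together with the terminal window `[l' + β·w(t), u' + β·w(t)]`. -/
def corridorEnd (β l u l' u' : ℝ) (t : ℝ≥0) (w : BMPath) : Set BMPath :=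
  {f : BMPath | (∀ s ≤ t, l + β * w s ≤ f s ∧ f s ≤ u + β * w s) ∧
    (l' + β * w t ≤ f t ∧ f t ≤ u' + β * w t)}

/-- `X̄_t(w) = −ln inf_{x∈[a₀,b₀]} μ^x(corridor [l,u] with terminal window [l',u'])`. -/
def Xbar (μ : ℝ → Measure BMPath) (β l u a₀ b₀ l' u' : ℝ) (t : ℝ≥0) (w : BMPath) : ℝ :=
  - Real.log (⨅ x : Icc a₀ b₀, ((μ x) (corridorEnd β l u l' u' t w)).toReal)

/-- `X̲_t(w) = −ln sup_{x∈ℝ} μ^x(corridor [l,u])`. -/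
def Xlow (μ : ℝ → Measure BMPath) (β l u : ℝ) (t : ℝ≥0) (w : BMPath) : ℝ :=
  - Real.log (⨆ x : ℝ, ((μ x) (corridor β l u t w)).toReal)

/-!
Brownian scaling `f ↦ (s ↦ f (c² s) / c)` sends a Brownian motion from `x` to one from `x / c`,
because the law of Brownian motion is pinned down by its finite-dimensional distributions
(sampling a continuous path along a dense sequence of times is a measurable embedding). The same
map carries the corridor of width `d` around `w` up to time `t` onto the corridor of width `1`
around the rescaled path up to time `t / d²`. Since Wiener measure is scaling invariant, both
almost-sure limits can be read off along one path `w`, and the time change `t ↦ t / d²` divides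
the rate by `d²`.
-/

lemma iIndepFun_map_of_comp {Ω Ω' ι β : Type*} [Fintype ι] [MeasurableSpace Ω]
    [MeasurableSpace Ω'] [MeasurableSpace β] {μ : Measure Ω} [IsProbabilityMeasure μ]
    {g : Ω → Ω'} (hg : Measurable g) {F : ι → Ω' → β} (hF : ∀ i, Measurable (F i))
    (h : iIndepFun (fun i => F i ∘ g) μ) :
    iIndepFun F (μ.map g) := by
  have := Measure.isProbabilityMeasure_map (μ := μ) hg.aemeasurable
  rw [iIndepFun_iff_map_fun_eq_pi_map fun i => (hF i).aemeasurable,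
    Measure.map_map (measurable_pi_lambda _ hF) hg]
  simp_rw [Measure.map_map (hF _) hg]
  exact h.map_fun_eq_pi_map fun i => ((hF i).comp hg).aemeasurable

lemma measurable_partialSum {M : Type*} [AddMonoid M] [MeasurableSpace M] [MeasurableAdd₂ M]
    {n : ℕ} (i : Fin (n + 1)) : Measurable fun v : Fin n → M => Fin.partialSum v i := by
  induction i using Fin.induction with
  | zero => simp [measurable_const]
  | succ j ih =>
    simp_rw [Fin.partialSum_succ]
    exact ih.add (measurable_pi_apply j)

lemma ContinuousMap.measurableEmbedding_sample_denseSeq {X Y : Type*} [TopologicalSpace X]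
    [TopologicalSpace.SeparableSpace X] [Nonempty X] [TopologicalSpace Y] [T2Space Y]
    [SecondCountableTopology Y] [MeasurableSpace Y] [BorelSpace Y]
    [MeasurableSpace C(X, Y)] [StandardBorelSpace C(X, Y)] [OpensMeasurableSpace C(X, Y)] :
    MeasurableEmbedding fun (f : C(X, Y)) (n : ℕ) => f (TopologicalSpace.denseSeq X n) := by
  refine Measurable.measurableEmbedding ?_ fun f g hfg => ?_
  · exact measurable_pi_lambda _ fun n => (continuous_eval_const _).measurable
  · exact DFunLike.coe_injective <| Continuous.ext_on (TopologicalSpace.denseRange_denseSeq X)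
      f.continuous g.continuous fun _ ⟨n, hn⟩ => hn ▸ congrFun hfg n

lemma exists_monotone_fin_cover {ι : Type*} [Fintype ι] (τ : ι → ℝ≥0) :
    ∃ (n : ℕ) (ts : Fin (n + 1) → ℝ≥0) (k : ι → Fin (n + 1)),
      Monotone ts ∧ ts 0 = 0 ∧ ts ∘ k = τ := by
  classical
  set s : Finset ℝ≥0 := insert 0 (Finset.univ.image τ)
  obtain ⟨n, hn⟩ : ∃ n, s.card = n + 1 :=
    Nat.exists_eq_succ_of_ne_zero (Finset.card_ne_zero_of_mem (Finset.mem_insert_self 0 _))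
  have hrange : ∀ i, τ i ∈ Set.range (s.orderEmbOfFin hn) := by
    simp [Finset.range_orderEmbOfFin, s]
  choose k hk using hrange
  refine ⟨n, s.orderEmbOfFin hn, k, (s.orderEmbOfFin hn).monotone, ?_, funext hk⟩
  exact (s.orderEmbOfFin_zero hn n.succ_pos).trans
    (le_antisymm (s.min'_le 0 (Finset.mem_insert_self _ _)) zero_le)

lemma measurable_eval (t : ℝ≥0) : Measurable fun f : BMPath => f t :=
  (continuous_eval_const t).measurable

def pathIncrements {n : ℕ} (ts : Fin (n + 1) → ℝ≥0) (f : BMPath) (i : Fin n) : ℝ :=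
  f (ts i.succ) - f (ts i.castSucc)

lemma measurable_pathIncrements {n : ℕ} (ts : Fin (n + 1) → ℝ≥0) :
    Measurable (pathIncrements ts) :=
  measurable_pi_lambda _ fun _ => (measurable_eval _).sub (measurable_eval _)

namespace IsBMLaw

variable {x : ℝ} {μ μ₁ μ₂ : Measure BMPath}

lemma ae_start (h : IsBMLaw x μ) : ∀ᵐ f ∂μ, f 0 = x := by
  have := h.isProb
  have hmeas : MeasurableSet {f : BMPath | f 0 = x} :=
    (measurable_eval 0) (measurableSet_singleton x)
  rw [ae_iff_measure_eq hmeas.nullMeasurableSet, measure_univ]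
  exact h.start

lemma map_pathIncrements (h : IsBMLaw x μ) {n : ℕ} {ts : Fin (n + 1) → ℝ≥0}
    (hts : Monotone ts) :
    μ.map (pathIncrements ts) =
      Measure.pi fun i => gaussianReal 0 (ts i.succ - ts i.castSucc) := by
  have := h.isProb
  refine ((h.indep_incr n ts hts).map_fun_eq_pi_map
    fun i => ((measurable_eval _).sub (measurable_eval _)).aemeasurable).trans ?_
  exact congrArg Measure.pi (funext fun i => h.incr_law _ _ (hts i.castSucc_le_succ))

lemma ae_eval_eq_partialSum (h : IsBMLaw x μ) {n : ℕ} {ts : Fin (n + 1) → ℝ≥0}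
    (h0 : ts 0 = 0) :
    ∀ᵐ f ∂μ, (fun i => f (ts i)) = fun i => x + Fin.partialSum (pathIncrements ts f) i := by
  filter_upwards [h.ae_start] with f hf
  conv_lhs => rw [← Fin.partialSum_left_neg fun i => f (ts i)]
  ext i
  simp only [Pi.vadd_apply, vadd_eq_add, h0, hf, neg_add_eq_sub]
  rfl

lemma map_eval_fin (h : IsBMLaw x μ) {n : ℕ} {ts : Fin (n + 1) → ℝ≥0} (hts : Monotone ts)
    (h0 : ts 0 = 0) :
    μ.map (fun f i => f (ts i)) =
      (Measure.pi fun i => gaussianReal 0 (ts i.succ - ts i.castSucc)).map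
        fun v i => x + Fin.partialSum v i := by
  have hrec : Measurable fun (v : Fin n → ℝ) (i : Fin (n + 1)) => x + Fin.partialSum v i :=
    measurable_pi_lambda _ fun i => (measurable_partialSum i).const_add x
  rw [Measure.map_congr (h.ae_eval_eq_partialSum h0), ← h.map_pathIncrements hts,
    Measure.map_map hrec (measurable_pathIncrements ts)]
  rfl

lemma map_eval_eq (h₁ : IsBMLaw x μ₁) (h₂ : IsBMLaw x μ₂) {ι : Type*} [Fintype ι]
    (τ : ι → ℝ≥0) : μ₁.map (fun f i => f (τ i)) = μ₂.map (fun f i => f (τ i)) := by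
  obtain ⟨n, ts, k, hmono, h0, rfl⟩ := exists_monotone_fin_cover τ
  have hsel : Measurable fun (v : Fin (n + 1) → ℝ) (i : ι) => v (k i) :=
    measurable_pi_lambda _ fun i => measurable_pi_apply (k i)
  have hev : Measurable fun (f : BMPath) (j : Fin (n + 1)) => f (ts j) :=
    measurable_pi_lambda _ fun j => measurable_eval (ts j)
  rw [show (fun (f : BMPath) i => f ((ts ∘ k) i)) = (fun v i => v (k i)) ∘ fun f j => f (ts j)
    from rfl, ← Measure.map_map hsel hev, ← Measure.map_map hsel hev,
    h₁.map_eval_fin hmono h0, h₂.map_eval_fin hmono h0]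

theorem unique (h₁ : IsBMLaw x μ₁) (h₂ : IsBMLaw x μ₂) : μ₁ = μ₂ := by
  have := h₁.isProb
  have := h₂.isProb
  have hsample := ContinuousMap.measurableEmbedding_sample_denseSeq (X := ℝ≥0) (Y := ℝ)
  refine hsample.map_injective (IsProjectiveLimit.unique
    (P := fun I => μ₁.map fun f (i : I) => f (TopologicalSpace.denseSeq ℝ≥0 i))
    (fun I => ?_) (fun I => ?_))
  · rw [Measure.map_map (Finset.measurable_restrict I) hsample.measurable]; rfl
  · rw [Measure.map_map (Finset.measurable_restrict I) hsample.measurable]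
    exact h₂.map_eval_eq h₁ _

end IsBMLaw

def bmRescale (c : ℝ≥0) (f : BMPath) : BMPath :=
  ⟨fun s => f (c ^ 2 * s) / c, by fun_prop⟩

@[simp]
lemma bmRescale_apply (c : ℝ≥0) (f : BMPath) (s : ℝ≥0) : bmRescale c f s = f (c ^ 2 * s) / c :=
  rfl

lemma continuous_bmRescale (c : ℝ≥0) : Continuous (bmRescale c) :=
  ContinuousMap.continuous_of_continuous_uncurry _ <|
    show Continuous fun p : BMPath × ℝ≥0 => p.1 (c ^ 2 * p.2) / c by fun_prop

lemma measurable_bmRescale (c : ℝ≥0) : Measurable (bmRescale c) :=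
  (continuous_bmRescale c).measurable

lemma increment_comp_bmRescale (c : ℝ≥0) (s t : ℝ≥0) :
    (fun f : BMPath => f t - f s) ∘ bmRescale c =
      (fun y => (c : ℝ)⁻¹ * y) ∘ fun f : BMPath => f (c ^ 2 * t) - f (c ^ 2 * s) := by
  funext f
  simp [div_eq_inv_mul, mul_sub]

lemma IsBMLaw.map_bmRescale {x : ℝ} {μ : Measure BMPath} (h : IsBMLaw x μ) {c : ℝ≥0}
    (hc : 0 < c) : IsBMLaw (x / c) (μ.map (bmRescale c)) := by
  have := h.isProb
  have hc' : (c : ℝ) ≠ 0 := by positivity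
  have hincr (s t : ℝ≥0) : Measurable fun f : BMPath => f t - f s :=
    (measurable_eval t).sub (measurable_eval s)
  refine ⟨Measure.isProbabilityMeasure_map (measurable_bmRescale c).aemeasurable, ?_, ?_, ?_⟩
  · have hmeas : MeasurableSet {f : BMPath | f 0 = x / c} :=
      (measurable_eval 0) (measurableSet_singleton _)
    rw [Measure.map_apply (measurable_bmRescale c) hmeas]
    convert h.start using 2
    ext f
    simp [div_left_inj' hc']
  · intro s t hst
    rw [Measure.map_map (hincr s t) (measurable_bmRescale c), increment_comp_bmRescale,
      ← Measure.map_map (measurable_const_mul _) (hincr _ _),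
      h.incr_law _ _ (by gcongr), gaussianReal_map_const_mul, mul_zero]
    congr 1
    ext
    simp [← mul_tsub, NNReal.coe_sub hst, hc']
  · intro n ts hts
    refine iIndepFun_map_of_comp (measurable_bmRescale c) (fun i => hincr _ _) ?_
    simp_rw [increment_comp_bmRescale]
    have hmono : Monotone fun i => c ^ 2 * ts i := fun i j hij => mul_le_mul_right (hts hij) _
    exact (h.indep_incr n _ hmono).comp _ fun _ => measurable_const_mul _

lemma isClosed_corridor (β l u : ℝ) (t : ℝ≥0) (w : BMPath) : IsClosed (corridor β l u t w) := by
  simp only [corridor, Set.ofPred_forall]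
  refine isClosed_iInter fun s => isClosed_iInter fun _ => ?_
  have hlower : IsClosed {f : BMPath | l + β * w s ≤ f s} :=
    isClosed_le continuous_const (continuous_eval_const s)
  have hupper : IsClosed {f : BMPath | f s ≤ u + β * w s} :=
    isClosed_le (continuous_eval_const s) continuous_const
  exact hlower.inter hupper

lemma preimage_bmRescale_corridor {c : ℝ≥0} (hc : 0 < c) (β l u : ℝ) (t : ℝ≥0) (w : BMPath) :
    bmRescale c ⁻¹' corridor β (l / c) (u / c) (t / c ^ 2) (bmRescale c w) =
      corridor β l u t w := by
  have hc' : (0 : ℝ) < c := hc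
  have hc2 : 0 < c ^ 2 := pow_pos hc 2
  have hscale (f : BMPath) (r : ℝ≥0) :
      (l / c + β * (w r / c) ≤ f r / c ∧ f r / c ≤ u / c + β * (w r / c)) ↔
        (l + β * w r ≤ f r ∧ f r ≤ u + β * w r) := by
    rw [mul_div_assoc', ← add_div, ← add_div, div_le_div_iff_of_pos_right hc',
      div_le_div_iff_of_pos_right hc']
  ext f
  simp only [corridor, mem_preimage, Set.mem_ofPred_eq, bmRescale_apply, hscale]
  constructor
  · intro hf s hs
    have hcancel : c ^ 2 * (s / c ^ 2) = s := by field_simp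
    have hfs := hf (s / c ^ 2) (by gcongr)
    rwa [hcancel] at hfs
  · intro hf s hs
    exact hf _ ((le_div_iff₀' hc2).mp hs)

lemma iSup_measure_corridor_eq_bmRescale {μ : ℝ → Measure BMPath} (hμ : ∀ x, IsBMLaw x (μ x))
    {c : ℝ≥0} (hc : 0 < c) (β l u : ℝ) (t : ℝ≥0) (w : BMPath) :
    ⨆ x, (μ x (corridor β l u t w)).toReal =
      ⨆ x, (μ x (corridor β (l / c) (u / c) (t / c ^ 2) (bmRescale c w))).toReal := by
  have hc' : (c : ℝ) ≠ 0 := by positivity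
  have hcorr (x : ℝ) : μ x (corridor β l u t w) =
      μ (x / c) (corridor β (l / c) (u / c) (t / c ^ 2) (bmRescale c w)) := by
    rw [← preimage_bmRescale_corridor hc, ← Measure.map_apply (measurable_bmRescale c)
      (isClosed_corridor ..).measurableSet, ((hμ x).map_bmRescale hc).unique (hμ _)]
  simp_rw [hcorr]
  exact Function.Surjective.iSup_comp (f := fun x : ℝ => x / c)
    (fun y => ⟨y * c, mul_div_cancel_right₀ y hc'⟩)
    fun y => (μ y (corridor β (l / c) (u / c) (t / c ^ 2) (bmRescale c w))).toReal

lemma tendsto_neg_inv_mul_comp_div {φ : ℝ≥0 → ℝ} {Γ : ℝ} {D : ℝ≥0} (hD : 0 < D)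
    (h : Tendsto (fun t : ℝ≥0 => -(1 / (t : ℝ)) * φ t) atTop (𝓝 Γ)) :
    Tendsto (fun t : ℝ≥0 => -(1 / (t : ℝ)) * φ (t / D)) atTop (𝓝 (Γ / D)) := by
  refine ((h.comp (tendsto_id.atTop_div_const hD)).div_const (D : ℝ)).congr fun t => ?_
  have hD' : (D : ℝ) ≠ 0 := by positivity
  simp only [Function.comp_apply, id, NNReal.coe_div, one_div_div]
  field_simp

theorem corridor_rate_scaling_general
    (β d : ℝ) (hd : 0 < d)
    (ν : Measure BMPath) (hν : IsBMLaw 0 ν)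
    (μ : ℝ → Measure BMPath) (hμ : ∀ x : ℝ, IsBMLaw x (μ x))
    (Γ₁ Γd : ℝ)
    (h₁ : ∀ᵐ w ∂ν, Tendsto (fun t : ℝ≥0 =>
        -(1 / (t : ℝ)) * Real.log (⨆ x : ℝ, ((μ x) (corridor β 0 1 t w)).toReal))
      atTop (𝓝 Γ₁))
    (h₂ : ∀ᵐ w ∂ν, Tendsto (fun t : ℝ≥0 =>
        -(1 / (t : ℝ)) * Real.log (⨆ x : ℝ, ((μ x) (corridor β 0 d t w)).toReal))
      atTop (𝓝 Γd)) :
    Γd = Γ₁ / d ^ 2 := by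
  set c := d.toNNReal
  have hc : 0 < c := Real.toNNReal_pos.mpr hd
  have hcd : (c : ℝ) = d := Real.coe_toNNReal d hd.le
  have := hν.isProb
  have hν_inv : ν.map (bmRescale c) = ν := by
    have hν' := hν.map_bmRescale hc
    rw [zero_div] at hν'
    exact hν'.unique hν
  have h₁' := ae_of_ae_map (measurable_bmRescale c).aemeasurable (hν_inv.symm ▸ h₁)
  obtain ⟨w, hw₁, hw₂⟩ := (h₁'.and h₂).exists
  have hsup (t : ℝ≥0) : ⨆ x, (μ x (corridor β 0 d t w)).toReal =
      ⨆ x, (μ x (corridor β 0 1 (t / c ^ 2) (bmRescale c w))).toReal := by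
    simpa [hcd, hd.ne'] using iSup_measure_corridor_eq_bmRescale hμ hc β 0 d t w
  have hw₂' := tendsto_neg_inv_mul_comp_div (pow_pos hc 2) hw₁
  simp_rw [← hsup] at hw₂'
  rw [tendsto_nhds_unique hw₂ hw₂', NNReal.coe_pow, hcd]

/-- **Scaling.** If the quenched exponential decay rate of staying in a corridor of
width `1` is `Γ₁` and that of a corridor of width `d` is `Γ_d`, then `Γ_d = Γ₁ / d²`. -/
theorem corridor_rate_scaling
    (β d : ℝ) (hd : 0 < d)
    (ν : Measure BMPath) (hν : IsBMLaw 0 ν)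
    (μ : ℝ → Measure BMPath) (hμ : ∀ x : ℝ, IsBMLaw x (μ x))
    (Γ₁ Γd : ℝ) (hΓ₁ : 0 < Γ₁) (hΓd : 0 < Γd)
    (h₁ : ∀ᵐ w ∂ν, Tendsto (fun t : ℝ≥0 =>
        -(1 / (t : ℝ)) * Real.log (⨆ x : ℝ, ((μ x) (corridor β 0 1 t w)).toReal))
      atTop (𝓝 Γ₁))
    (h₂ : ∀ᵐ w ∂ν, Tendsto (fun t : ℝ≥0 =>
        -(1 / (t : ℝ)) * Real.log (⨆ x : ℝ, ((μ x) (corridor β 0 d t w)).toReal))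
      atTop (𝓝 Γd)) :
    Γd = Γ₁ / d ^ 2 :=
  corridor_rate_scaling_general β d hd ν hν μ hμ Γ₁ Γd h₁ h₂
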